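/- arXiv:2201.08548 — 7 statements merged into one kernel-verified Lean document; each statement's English description precedes it below -/
import Mathlib

section
/- Let G be a finite group and let e ∈ F₂[G] satisfy e² = e and ê = e, where ê = Σ_g a_g g⁻¹ for e = Σ_g a_g g. Then the support (component set) M = {g ∈ G : coefficient of g in e is 1} contains no element of order 2. -/
/-!
The coefficient of an involution `g` in `e * e` is `∑ₐ e(a) e(a⁻¹g)`. Left multiplication by
`g` is a fixed-point-free involution of `G`, and when `e(a⁻¹) = e(a)` it maps the term at `a` to
the same term, so the terms cancel in pairs in characteristic two. Hence `e(g) = (e * e)(g) = 0`.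
-/

namespace MonoidAlgebra

variable {R G : Type*} [CommSemiring R] [CharP R 2] [Group G] [Fintype G]

theorem coeff_mul_self_eq_zero_of_coeff_inv {x : R[G]} (hx : ∀ a, x.coeff a⁻¹ = x.coeff a)
    {g : G} (hg_inv : g⁻¹ = g) (hg_ne : g ≠ 1) : (x * x).coeff g = 0 := by
  rw [coeff_mul_apply_left, Finsupp.sum_fintype _ _ fun _ => zero_mul _]
  refine Finset.sum_ninvolution (g * ·) (fun a => ?_) (fun a _ => mul_ne_right.mpr hg_ne)
    (fun _ => Finset.mem_univ _) (fun a => ?_)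
  · have h_partner :
        x.coeff (g * a) * x.coeff ((g * a)⁻¹ * g) = x.coeff (a⁻¹ * g) * x.coeff a := by
      rw [← hx (g * a), mul_inv_rev, inv_mul_cancel_right, hg_inv, hx]
    rw [h_partner, mul_comm (x.coeff (a⁻¹ * g)), CharTwo.add_self_eq_zero]
  · nth_rw 1 [← hg_inv]
    exact inv_mul_cancel_left g a

end MonoidAlgebra

theorem support_of_lcd_idempotent_no_order_two {G : Type*} [Group G] [Fintype G]
    (e : MonoidAlgebra (ZMod 2) G)
    (hidem : e * e = e)
    (hadj : Finsupp.mapDomain (fun g : G => g⁻¹) e.coeff = e.coeff) :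
    ∀ g ∈ e.coeff.support, orderOf g ≠ 2 := by
  intro g hg hord
  obtain ⟨hg_sq, hg_ne⟩ := orderOf_eq_prime_iff.mp hord
  have he_inv : ∀ a, e.coeff a⁻¹ = e.coeff a := fun a => by
    simpa only [hadj] using Finsupp.mapDomain_apply inv_injective e.coeff a
  have hg_inv : g⁻¹ = g := inv_eq_of_mul_eq_one_right (pow_two g ▸ hg_sq)
  have h_zero := MonoidAlgebra.coeff_mul_self_eq_zero_of_coeff_inv he_inv hg_inv hg_ne
  rw [hidem] at h_zero
  exact Finsupp.mem_support_iff.mp hg h_zero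
end

section
/- Let G be a finite group and M a subgroup of G of odd order. Let e = Σ_{g ∈ M} g ∈ F₂[G]. Then e² = e and ê = e, so C = e·F₂[G] is an LCD group code. -/
namespace MonoidAlgebra

variable (k : Type*) {G : Type*} [Semiring k] [Group G] [Fintype G]
  (M : Subgroup G) [DecidablePred (· ∈ M)]

noncomputable def subgroupSum : MonoidAlgebra k G :=
  ∑ g ∈ Finset.univ.filter (· ∈ M), of k G g

lemma subgroupSum_eq_sum_subtype : subgroupSum k M = ∑ m : M, of k G m :=
  Finset.sum_subtype _ (by simp) _

variable {k M}

lemma of_mul_subgroupSum {g : G} (hg : g ∈ M) :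
    of k G g * subgroupSum k M = subgroupSum k M := by
  rw [subgroupSum_eq_sum_subtype, Finset.mul_sum]
  simp_rw [← map_mul]
  exact Equiv.sum_comp (Equiv.mulLeft (⟨g, hg⟩ : M)) fun m => of k G m

variable (k M)

lemma subgroupSum_mul_self :
    subgroupSum k M * subgroupSum k M = Nat.card M • subgroupSum k M := by
  nth_rw 1 [subgroupSum]
  rw [Finset.sum_mul,
    Finset.sum_congr rfl fun g hg => of_mul_subgroupSum (Finset.mem_filter.mp hg).2,
    Finset.sum_const, Nat.card_eq_fintype_card, Fintype.card_subtype]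

lemma isIdempotentElem_subgroupSum (hM : (Nat.card M : k) = 1) :
    IsIdempotentElem (subgroupSum k M) := by
  rw [IsIdempotentElem, subgroupSum_mul_self, ← Nat.cast_smul_eq_nsmul k, hM, one_smul]

lemma coeff_subgroupSum_apply (g : G) :
    (subgroupSum k M).coeff g = if g ∈ M then 1 else 0 := by
  classical
  simp [subgroupSum, coeff_sum, Finsupp.finsetSum_apply, of_apply, Finsupp.single_apply]

lemma mapDomain_inv_coeff_subgroupSum :
    Finsupp.mapDomain (fun g : G => g⁻¹) (subgroupSum k M).coeff = (subgroupSum k M).coeff := by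
  ext g
  rw [← inv_inv g, Finsupp.mapDomain_apply inv_injective, coeff_subgroupSum_apply,
    coeff_subgroupSum_apply]
  simp only [inv_mem_iff]

end MonoidAlgebra

open MonoidAlgebra in
theorem sum_of_odd_subgroup_is_lcd_idempotent_general {G : Type*} [Group G] [Fintype G]
    (M : Subgroup G) [DecidablePred (· ∈ M)]
    (hM : Odd (Nat.card M))
    (e : MonoidAlgebra (ZMod 2) G)
    (he : e = ∑ g ∈ Finset.univ.filter (· ∈ M), MonoidAlgebra.of (ZMod 2) G g) :
    e * e = e ∧ Finsupp.mapDomain (fun g : G => g⁻¹) e.coeff = e.coeff := by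
  rw [← subgroupSum] at he
  subst he
  exact ⟨isIdempotentElem_subgroupSum _ M (ZMod.natCast_eq_one_iff_odd.mpr hM),
    mapDomain_inv_coeff_subgroupSum _ M⟩

theorem sum_of_odd_subgroup_is_lcd_idempotent {G : Type*} [Group G] [Fintype G]
    [DecidableEq G] (M : Subgroup G) [DecidablePred (· ∈ M)]
    (hM : Odd (Nat.card M))
    (e : MonoidAlgebra (ZMod 2) G)
    (he : e = ∑ g ∈ Finset.univ.filter (· ∈ M), MonoidAlgebra.of (ZMod 2) G g) :
    e * e = e ∧ Finsupp.mapDomain (fun g : G => g⁻¹) e.coeff = e.coeff :=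
  sum_of_odd_subgroup_is_lcd_idempotent_general M hM e he
end

section
/- Let G be a finite abelian group and e ∈ F₂[G] with e² = e = ê and support M. Then M contains no element of even order. -/
/-! In characteristic `p` the Frobenius `x ↦ x ^ p` is additive, so for a commutative group `G`
the support of `e ^ p` lies in `{g ^ p | g ∈ M}`, where `M` is the support of `e`. If `e ^ p = e`,
then `M ⊆ {g ^ p | g ∈ M}`, so `g ↦ g ^ p` permutes the finite set `M` and each `g ∈ M` satisfies
`g ^ p ^ n = g` for some `n ≥ 1`. Then `orderOf g` divides `p ^ n - 1`, which is prime to `p`. -/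

open Function MonoidAlgebra

theorem MonoidAlgebra.support_pow_char_subset {k G : Type*} [CommSemiring k] [CommMonoid G]
    [DecidableEq G] (p : ℕ) [ExpChar k p] (e : MonoidAlgebra k G) :
    (e ^ p).coeff.support ⊆ e.coeff.support.image (· ^ p) := by
  have : ExpChar (MonoidAlgebra k G) p :=
    expChar_of_injective_algebraMap (FaithfulSMul.algebraMap_injective k _) p
  conv_lhs => rw [← sum_coeff_single e, Finsupp.sum, sum_pow_char, coeff_sum]
  refine Finsupp.support_finsetSum.trans (Finset.biUnion_subset.2 fun g hg => ?_)
  rw [single_pow, coeff_single]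
  exact Finsupp.support_single_subset.trans
    (Finset.singleton_subset_iff.2 (Finset.mem_image_of_mem _ hg))

theorem Finset.mem_periodicPts_of_subset_image {α : Type*} [DecidableEq α] {s : Finset α}
    {f : α → α} (hs : s ⊆ s.image f) {x : α} (hx : x ∈ s) : x ∈ periodicPts f := by
  have himage : s.image f = s := (Finset.eq_of_subset_of_card_le hs Finset.card_image_le).symm
  have hmaps : Set.MapsTo f s s := fun y hy => himage ▸ Finset.mem_image_of_mem f hy
  have hinj : Injective (hmaps.restrict f s s) :=
    hmaps.restrict_inj.2 (Finset.injOn_of_card_image_eq (by rw [himage]))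
  obtain ⟨n, hn, hper⟩ := hinj.mem_periodicPts ⟨x, hx⟩
  exact ⟨n, hn, hper.map (g := Subtype.val) (fb := f) fun _ => rfl⟩

theorem orderOf_dvd_sub_one_of_pow_eq_self {G : Type*} [Group G] {g : G} {m : ℕ}
    (h : g ^ m = g) : orderOf g ∣ m - 1 := by
  rcases m with _ | m
  · rw [pow_zero] at h
    simp [← h]
  · exact orderOf_dvd_of_pow_eq_one (mul_right_cancel (b := g) (by simpa [← pow_succ] using h))

theorem not_dvd_orderOf_of_mem_periodicPts_pow {G : Type*} [Group G] {p : ℕ} (hp : 1 < p)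
    {g : G} (hg : g ∈ periodicPts (· ^ p)) : ¬ p ∣ orderOf g := by
  intro hdvd
  obtain ⟨n, hn, hper⟩ := hg
  have hfix : g ^ p ^ n = g := by simpa [IsPeriodicPt, IsFixedPt, pow_iterate] using hper
  have hsub : p ∣ p ^ n - 1 := hdvd.trans (orderOf_dvd_sub_one_of_pow_eq_self hfix)
  have hone := Nat.dvd_sub (dvd_pow_self p hn.ne') hsub
  rw [Nat.sub_sub_self (Nat.one_le_pow _ _ (by omega))] at hone
  exact hp.ne' (Nat.dvd_one.1 hone)

theorem MonoidAlgebra.not_dvd_orderOf_of_pow_char_eq_self {k G : Type*} [CommSemiring k]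
    [CommGroup G] (p : ℕ) [hp : Fact p.Prime] [CharP k p] {e : MonoidAlgebra k G} (he : e ^ p = e) :
    ∀ g ∈ e.coeff.support, ¬ p ∣ orderOf g := by
  classical
  have hclosed : e.coeff.support ⊆ e.coeff.support.image (· ^ p) := by
    simpa only [he] using support_pow_char_subset p e
  exact fun g hg => not_dvd_orderOf_of_mem_periodicPts_pow hp.out.one_lt
    (Finset.mem_periodicPts_of_subset_image hclosed hg)

theorem support_no_even_order_of_abelian_lcd_idempotent_general {G : Type*} [CommGroup G]
    (e : MonoidAlgebra (ZMod 2) G)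
    (hidem : e * e = e) :
    ∀ g ∈ e.coeff.support, ¬ Even (orderOf g) := by
  intro g hg heven
  exact not_dvd_orderOf_of_pow_char_eq_self 2 (by rwa [sq]) g hg heven.two_dvd

theorem support_no_even_order_of_abelian_lcd_idempotent {G : Type*} [CommGroup G]
    [Fintype G] (e : MonoidAlgebra (ZMod 2) G)
    (hidem : e * e = e)
    (hadj : Finsupp.mapDomain (fun g : G => g⁻¹) e.coeff = e.coeff) :
    ∀ g ∈ e.coeff.support, ¬ Even (orderOf g) :=
  support_no_even_order_of_abelian_lcd_idempotent_general e hidem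
end

section
/- For every natural number a ≥ 1, there is no nontrivial binary cyclic LCD code of length 2^a; equivalently, if g(x) = (x−1)^i with 1 ≤ i ≤ 2^a − 1 generates an ideal C in F₂[x]/(x^{2^a} − 1), then C ∩ C^⊥ ≠ {0}. -/
/-!
The all-ones word lies in `C ∩ C^⊥`. Its polynomial `∑_{j < 2^a} x^j = (x^{2^a} - 1)/(x - 1)` equals
`(x - 1)^{2^a - 1}` in characteristic 2, hence is a multiple of the generator `(x - 1)^i`. Conversely,
`x - 1` divides both the generator and `x^{2^a} - 1`, so every codeword polynomial vanishes at `1`: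
every codeword has even weight, which is orthogonality to the all-ones word.
-/

open Polynomial

/-- The cyclic code of length `2 ^ a` generated by `(X - 1) ^ i`, as an ideal of
`F₂[x]/(x^{2^a} - 1)`. -/
noncomputable def cyclicCodeIdeal (a i : ℕ) :
    Ideal ((ZMod 2)[X] ⧸ Ideal.span {(X : (ZMod 2)[X]) ^ 2 ^ a - 1}) :=
  Ideal.span {Ideal.Quotient.mk (Ideal.span {(X : (ZMod 2)[X]) ^ 2 ^ a - 1})
    ((X - 1) ^ i)}

/-- The cyclic code as a set of coefficient vectors in `F₂^{2^a}`. -/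
noncomputable def cyclicCodeSet (a i : ℕ) : Set (Fin (2 ^ a) → ZMod 2) :=
  {v | Ideal.Quotient.mk (Ideal.span {(X : (ZMod 2)[X]) ^ 2 ^ a - 1})
    (∑ j : Fin (2 ^ a), C (v j) * X ^ (j : ℕ)) ∈ cyclicCodeIdeal a i}

theorem geom_sum_X_eq_X_sub_one_pow {R : Type*} [CommRing R] (p : ℕ) [Fact p.Prime] [CharP R p]
    (n : ℕ) : ∑ j ∈ Finset.range (p ^ n), (X : R[X]) ^ j = (X - 1) ^ (p ^ n - 1) := by
  apply (monic_X_sub_C (1 : R)).isRegular.right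
  dsimp only
  rw [C_1, geom_sum_mul, ← pow_succ,
    Nat.sub_add_cancel (Nat.one_le_pow _ _ (Fact.out : p.Prime).pos), sub_pow_char_pow, one_pow]

theorem dvd_of_mk_mem_span_singleton_mk {R : Type*} [CommRing R] {f g q d : R} (hdf : d ∣ f)
    (hdg : d ∣ g)
    (hq : Ideal.Quotient.mk (Ideal.span {f}) q ∈ Ideal.span {Ideal.Quotient.mk (Ideal.span {f}) g}) :
    d ∣ q := by
  obtain ⟨c, hc⟩ := Ideal.mem_span_singleton.mp hq
  obtain ⟨r, rfl⟩ := Ideal.Quotient.mk_surjective c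
  rw [← map_mul, eq_comm, Ideal.Quotient.eq, Ideal.mem_span_singleton] at hc
  simpa using (hdg.mul_right r).sub (hdf.trans hc)

theorem sum_eq_zero_of_mem_cyclicCodeSet {a i : ℕ} (hi : i ≠ 0) {w : Fin (2 ^ a) → ZMod 2}
    (hw : w ∈ cyclicCodeSet a i) : ∑ j, w j = 0 := by
  have hdvd : X - C 1 ∣ ∑ j : Fin (2 ^ a), C (w j) * X ^ (j : ℕ) := by
    refine dvd_of_mk_mem_span_singleton_mk ?_ ?_ hw
    · simpa using sub_dvd_pow_sub_pow (X : (ZMod 2)[X]) 1 (2 ^ a)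
    · exact dvd_pow (by rw [C_1]) hi
  simpa [eval_finsetSum] using (dvd_iff_isRoot.mp hdvd).eq_zero

theorem one_mem_cyclicCodeSet {a i : ℕ} (hi : i ≤ 2 ^ a - 1) : 1 ∈ cyclicCodeSet a i := by
  refine Ideal.mem_span_singleton.mpr (map_dvd _ ⟨(X - 1) ^ (2 ^ a - 1 - i), ?_⟩)
  rw [← pow_add, Nat.add_sub_cancel' hi, ← geom_sum_X_eq_X_sub_one_pow 2 a,
    Finset.sum_range fun j => (X : (ZMod 2)[X]) ^ j]
  simp

theorem no_nontrivial_lcd_cyclic_code_of_length_two_pow_general (a : ℕ)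
    (i : ℕ) (hi1 : 1 ≤ i) (hi2 : i ≤ 2 ^ a - 1) :
    ∃ v : Fin (2 ^ a) → ZMod 2, v ≠ 0 ∧ v ∈ cyclicCodeSet a i ∧
      ∀ w ∈ cyclicCodeSet a i, ∑ j : Fin (2 ^ a), v j * w j = 0 :=
  ⟨1, one_ne_zero, one_mem_cyclicCodeSet hi2, fun w hw => by
    simpa using sum_eq_zero_of_mem_cyclicCodeSet (Nat.one_le_iff_ne_zero.mp hi1) hw⟩

theorem no_nontrivial_lcd_cyclic_code_of_length_two_pow (a : ℕ) (ha : 1 ≤ a)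
    (i : ℕ) (hi1 : 1 ≤ i) (hi2 : i ≤ 2 ^ a - 1) :
    ∃ v : Fin (2 ^ a) → ZMod 2, v ≠ 0 ∧ v ∈ cyclicCodeSet a i ∧
      ∀ w ∈ cyclicCodeSet a i, ∑ j : Fin (2 ^ a), v j * w j = 0 :=
  no_nontrivial_lcd_cyclic_code_of_length_two_pow_general a i hi1 hi2
end

section
/- Let n = p^s for an odd prime p and s ≥ 1, and suppose n does not divide 2^m + 1 for any m ≥ 1. Then for any 2-cyclotomic coset C_i modulo n with |C_i| ≥ 2, C_i is not closed under negation: there exists x ∈ C_i with −x mod n ∉ C_i. -/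
/-- The 2-cyclotomic coset modulo `n` containing `i`. -/
def cyclotomicCoset (n : ℕ) (i : ZMod n) : Set (ZMod n) :=
  {x | ∃ j : ℕ, x = i * 2 ^ j}

lemma aux_not_dvd (p s : ℕ) (hp : p.Prime) (hodd : Odd p) (hs : 1 ≤ s)
    (hdiv : ∀ m : ℕ, 1 ≤ m → ¬ (p ^ s ∣ 2 ^ m + 1)) :
    ∀ m : ℕ, ¬ p ∣ 2 ^ m + 1 := by
  have hp2 : p ≠ 2 := by
    intro h; rw [h] at hodd; exact (Nat.not_odd_iff_even.mpr (by norm_num)) hodd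
  intro m hm
  rcases Nat.eq_zero_or_pos m with rfl | hm1
  · simp at hm
    exact hp2 ((Nat.prime_dvd_prime_iff_eq hp Nat.prime_two).mp hm)
  · have hx : ¬ p ∣ 2 ^ m := fun h =>
      hp2 ((Nat.prime_dvd_prime_iff_eq hp Nat.prime_two).mp (hp.dvd_of_dvd_pow h))
    have hxy : p ∣ 2 ^ m + 1 := hm
    have hoddn : Odd (p ^ (s - 1)) := hodd.pow
    have hLTE := Nat.emultiplicity_pow_add_pow hp hodd (x := 2 ^ m) (y := 1) hxy hx hoddn
    have h1 : (1 : ℕ∞) ≤ emultiplicity p (2 ^ m + 1) := by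
      apply le_emultiplicity_of_pow_dvd; simpa using hxy
    have h2 : emultiplicity p (p ^ (s - 1)) = (s - 1 : ℕ) :=
      emultiplicity_pow_self_of_prime hp.prime (s - 1)
    have hge : (s : ℕ∞) ≤ emultiplicity p ((2 ^ m) ^ (p ^ (s - 1)) + 1 ^ (p ^ (s - 1))) := by
      rw [hLTE, h2]
      calc (s : ℕ∞) = (1 + (s - 1) : ℕ) := by rw [Nat.add_sub_cancel' hs]
        _ = 1 + ((s - 1 : ℕ) : ℕ∞) := by push_cast; ring
        _ ≤ _ := add_le_add_left h1 _
    have hdvd : p ^ s ∣ (2 ^ m) ^ (p ^ (s - 1)) + 1 ^ (p ^ (s - 1)) :=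
      pow_dvd_of_le_emultiplicity hge
    rw [one_pow, ← pow_mul] at hdvd
    exact hdiv (m * p ^ (s - 1)) (Nat.mul_pos hm1 (pow_pos hp.pos _)) hdvd

theorem cyclotomicCoset_not_neg_closed_prime_pow (p s : ℕ) (hp : p.Prime)
    (hodd : Odd p) (hs : 1 ≤ s)
    (hdiv : ∀ m : ℕ, 1 ≤ m → ¬ (p ^ s ∣ 2 ^ m + 1)) :
    ∀ i : ZMod (p ^ s), 2 ≤ (cyclotomicCoset (p ^ s) i).ncard →
      ∃ x ∈ cyclotomicCoset (p ^ s) i, -x ∉ cyclotomicCoset (p ^ s) i := by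
  intro i hcard
  have hps : p ^ s ≠ 0 := pow_ne_zero _ hp.pos.ne'
  haveI : NeZero (p ^ s) := ⟨hps⟩
  have hi : i ≠ 0 := by
    rintro rfl
    have : cyclotomicCoset (p ^ s) (0 : ZMod (p ^ s)) = {0} := by
      ext x; simp [cyclotomicCoset]
    rw [this] at hcard
    simp at hcard
  refine ⟨i, ⟨0, by simp⟩, ?_⟩
  rintro ⟨m, hm⟩
  -- -i = i * 2 ^ m, so i * (2 ^ m + 1) = 0
  have hzero : i * ((2 ^ m + 1 : ℕ) : ZMod (p ^ s)) = 0 := by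
    push_cast
    rw [mul_add, mul_one, ← hm]
    ring
  have hcop : Nat.Coprime (2 ^ m + 1) (p ^ s) := by
    have hnd : ¬ p ∣ 2 ^ m + 1 := aux_not_dvd p s hp hodd hs hdiv m
    exact ((hp.coprime_iff_not_dvd.mpr hnd).symm).pow_right s
  have hunit : IsUnit ((2 ^ m + 1 : ℕ) : ZMod (p ^ s)) :=
    (ZMod.isUnit_iff_coprime _ _).mpr hcop
  rw [hunit.mul_left_eq_zero] at hzero
  exact hi hzero
end

section
/- Let n = pq for distinct odd primes p and q with n not dividing 2^l + 1 for any l ≥ 1. If q does not divide 2^l + 1 for any l ≥ 1 and p divides 2^m + 1 for some m ≥ 1, then the 2-cyclotomic coset C_q modulo n is closed under negation, while the coset C_p is not closed under negation. -/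
theorem forall_neg_mem_cyclotomicCoset_iff {n : ℕ} {i : ZMod n} :
    (∀ x ∈ cyclotomicCoset n i, -x ∈ cyclotomicCoset n i) ↔ -i ∈ cyclotomicCoset n i := by
  refine ⟨fun h => h i ⟨0, by simp⟩, ?_⟩
  rintro ⟨m, hm⟩ x ⟨j, rfl⟩
  exact ⟨m + j, by rw [pow_add, ← mul_assoc, ← hm, neg_mul]⟩

theorem neg_natCast_mem_cyclotomicCoset_iff {n a b : ℕ} (hab : a * b = n) (ha : a ≠ 0) :
    -(a : ZMod n) ∈ cyclotomicCoset n a ↔ ∃ j : ℕ, b ∣ 2 ^ j + 1 := by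
  subst hab
  refine exists_congr fun j => ?_
  calc -(a : ZMod (a * b)) = a * 2 ^ j
      ↔ ((a * (2 ^ j + 1) : ℕ) : ZMod (a * b)) = 0 := by
        push_cast
        constructor <;> intro h <;> linear_combination -h
    _ ↔ a * b ∣ a * (2 ^ j + 1) := ZMod.natCast_eq_zero_iff _ _
    _ ↔ b ∣ 2 ^ j + 1 := Nat.mul_dvd_mul_iff_left (Nat.pos_of_ne_zero ha)

theorem Odd.exists_one_le_dvd_two_pow_add_one {q j : ℕ} (hq : Odd q) (h : q ∣ 2 ^ j + 1) :
    ∃ l, 1 ≤ l ∧ q ∣ 2 ^ l + 1 := by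
  rcases j with _ | j
  · rcases (Nat.dvd_prime Nat.prime_two).1 (by simpa using h) with rfl | rfl
    · exact ⟨1, le_rfl, one_dvd _⟩
    · exact absurd hq (by decide)
  · exact ⟨j + 1, by omega, h⟩

theorem cyclotomicCoset_q_neg_closed_p_not_general (p q : ℕ)
    (hpo : Odd p) (hqo : Odd q)
    (hqd : ∀ l : ℕ, 1 ≤ l → ¬ (q ∣ 2 ^ l + 1))
    (hpd : ∃ m : ℕ, 1 ≤ m ∧ p ∣ 2 ^ m + 1) :
    (∀ x ∈ cyclotomicCoset (p * q) (q : ZMod (p * q)),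
        -x ∈ cyclotomicCoset (p * q) (q : ZMod (p * q))) ∧
    ¬ (∀ x ∈ cyclotomicCoset (p * q) (p : ZMod (p * q)),
        -x ∈ cyclotomicCoset (p * q) (p : ZMod (p * q))) := by
  rw [forall_neg_mem_cyclotomicCoset_iff, forall_neg_mem_cyclotomicCoset_iff,
    neg_natCast_mem_cyclotomicCoset_iff (mul_comm q p) hqo.pos.ne',
    neg_natCast_mem_cyclotomicCoset_iff rfl hpo.pos.ne']
  obtain ⟨m, -, hm⟩ := hpd
  refine ⟨⟨m, hm⟩, ?_⟩
  rintro ⟨j, hj⟩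
  obtain ⟨l, hl, hql⟩ := hqo.exists_one_le_dvd_two_pow_add_one hj
  exact hqd l hl hql

theorem cyclotomicCoset_q_neg_closed_p_not (p q : ℕ) (hp : p.Prime) (hq : q.Prime)
    (hpo : Odd p) (hqo : Odd q) (hpq : p ≠ q)
    (hn : ∀ l : ℕ, 1 ≤ l → ¬ (p * q ∣ 2 ^ l + 1))
    (hqd : ∀ l : ℕ, 1 ≤ l → ¬ (q ∣ 2 ^ l + 1))
    (hpd : ∃ m : ℕ, 1 ≤ m ∧ p ∣ 2 ^ m + 1) :
    (∀ x ∈ cyclotomicCoset (p * q) (q : ZMod (p * q)),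
        -x ∈ cyclotomicCoset (p * q) (q : ZMod (p * q))) ∧
    ¬ (∀ x ∈ cyclotomicCoset (p * q) (p : ZMod (p * q)),
        -x ∈ cyclotomicCoset (p * q) (p : ZMod (p * q))) :=
  cyclotomicCoset_q_neg_closed_p_not_general p q hpo hqo hqd hpd
end

section
/- Let G be a cyclic group of odd order n with n dividing 2^j + 1 for some j ≥ 1, and let t be the number of distinct 2-cyclotomic cosets modulo n. Then the number of nonzero idempotents e ∈ F₂[G] with e = ê (equivalently, of LCD group codes in F₂[G]) is 2^t − 1. -/
theorem Finsupp.mapDomain_eq_self_iff {α M : Type*} [AddCommMonoid M] {σ : α → α}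
    (hσ : σ.Bijective) (f : α →₀ M) : f.mapDomain σ = f ↔ ∀ a, f (σ a) = f a := by
  refine ⟨fun h a => by rw [← mapDomain_apply hσ.injective f a, h], fun h => ?_⟩
  ext x
  obtain ⟨a, rfl⟩ := hσ.surjective x
  rw [mapDomain_apply hσ.injective, h]

theorem apply_pow_two_pow_of_apply_mul_self {G β : Type*} [Monoid G] {f : G → β}
    (hf : ∀ g, f (g * g) = f g) (g : G) (m : ℕ) : f (g ^ 2 ^ m) = f g := by
  induction m with
  | zero => rw [pow_zero, pow_one]
  | succ m ih => rw [pow_succ, pow_mul, sq, hf, ih]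

theorem bijective_mul_self_of_odd_natCard {G : Type*} [Group G] (h : Odd (Nat.card G)) :
    Function.Bijective fun g : G => g * g := by
  convert Nat.Coprime.pow_left_bijective (n := 2) h.coprime_two_right using 2 with g
  exact (sq g).symm

theorem pow_eq_inv_of_natCard_dvd {G : Type*} [Group G] {k : ℕ} (h : Nat.card G ∣ k + 1)
    (g : G) : g ^ k = g⁻¹ :=
  eq_inv_of_mul_eq_one_left <| by
    rw [← pow_succ, orderOf_dvd_iff_pow_eq_one.mp ((orderOf_dvd_natCard g).trans h)]

theorem ZMod.pow_two_mul_eq_one_of_dvd {n a j : ℕ} (h : n ∣ a ^ j + 1) :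
    (a : ZMod n) ^ (2 * j) = 1 := by
  have h0 : ((a ^ j + 1 : ℕ) : ZMod n) = 0 := (ZMod.natCast_eq_zero_iff _ _).mpr h
  push_cast at h0
  rw [mul_comm, pow_mul]
  linear_combination ((a : ZMod n) ^ j - 1) * h0

namespace MonoidAlgebra

variable {G : Type*}

instance charP_two [Monoid G] : CharP (MonoidAlgebra (ZMod 2) G) 2 :=
  charP_of_injective_algebraMap' (ZMod 2) 2

theorem mul_self_eq_mapDomain [CommMonoid G] (e : MonoidAlgebra (ZMod 2) G) :
    e * e = e.mapDomain fun g => g * g := by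
  induction e using induction_linear with
  | zero => simp
  | add x y hx hy => rw [CharTwo.add_mul_self, hx, hy, mapDomain_add]
  | single g a => rw [single_mul_single, mapDomain_single, ← sq a, ZMod.pow_card]

theorem mul_self_eq_self_iff [CommMonoid G] (hsq : Function.Bijective fun g : G => g * g)
    (e : MonoidAlgebra (ZMod 2) G) : e * e = e ↔ ∀ g, e.coeff (g * g) = e.coeff g := by
  rw [mul_self_eq_mapDomain, ← coeff_inj, coeff_mapDomain, Finsupp.mapDomain_eq_self_iff hsq]

theorem coeff_mapDomain_inv_of_mul_self_eq_self [CommGroup G]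
    (hsq : Function.Bijective fun g : G => g * g) {j : ℕ} (hj : ∀ g : G, g ^ 2 ^ j = g⁻¹)
    {e : MonoidAlgebra (ZMod 2) G} (he : e * e = e) :
    e.coeff.mapDomain (fun g => g⁻¹) = e.coeff := by
  rw [Finsupp.mapDomain_eq_self_iff inv_involutive.bijective]
  intro g
  rw [← hj, apply_pow_two_pow_of_apply_mul_self ((mul_self_eq_self_iff hsq e).mp he)]

theorem card_idempotent_eq [CommMonoid G] [Finite G]
    (hsq : Function.Bijective fun g : G => g * g) :
    Nat.card {e : MonoidAlgebra (ZMod 2) G // e * e = e} =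
      Nat.card {f : G → ZMod 2 // ∀ g, f (g * g) = f g} :=
  Nat.card_congr <| (coeffEquiv.trans Finsupp.equivFunOnFinite).subtypeEquiv
    (mul_self_eq_self_iff hsq)

end MonoidAlgebra

theorem card_mul_self_invariant_eq_of_mulEquiv {R G β : Type*} [Semiring R] [Monoid G]
    (φ : Multiplicative R ≃* G) :
    Nat.card {f : G → β // ∀ g, f (g * g) = f g} =
      Nat.card {f : R → β // ∀ r, f (2 * r) = f r} :=
  Nat.card_congr <| (φ.toEquiv.symm.arrowCongr (Equiv.refl β)).subtypeEquiv fun f => by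
    show (∀ g, f (g * g) = f g) ↔
      ∀ r : R, f (φ (.ofAdd (2 * r))) = f (φ (.ofAdd r))
    simp only [two_mul, ofAdd_add, map_mul]
    exact φ.surjective.forall

section CyclotomicCoset

variable {n : ℕ}

theorem mem_cyclotomicCoset_self (i : ZMod n) : i ∈ cyclotomicCoset n i :=
  ⟨0, by rw [pow_zero, mul_one]⟩

theorem cyclotomicCoset_two_mul {m : ℕ} (hm : m ≠ 0) (h2 : (2 : ZMod n) ^ m = 1) (k : ZMod n) :
    cyclotomicCoset n (2 * k) = cyclotomicCoset n k := by
  obtain ⟨m, rfl⟩ := Nat.exists_eq_add_one_of_ne_zero hm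
  ext x
  constructor
  · rintro ⟨a, rfl⟩
    exact ⟨a + 1, by ring⟩
  · rintro ⟨a, rfl⟩
    exact ⟨a + m, by linear_combination (-k * 2 ^ a) * h2⟩

theorem two_mul_invariant_iff_ker_cyclotomicCoset_le {m : ℕ} (hm : m ≠ 0)
    (h2 : (2 : ZMod n) ^ m = 1) {β : Type*} (f : ZMod n → β) :
    (∀ k, f (2 * k) = f k) ↔ Setoid.ker (cyclotomicCoset n) ≤ Setoid.ker f := by
  rw [Setoid.le_def]
  constructor
  · intro hf i i' hii'
    obtain ⟨a, rfl⟩ : i' ∈ cyclotomicCoset n i := hii' ▸ mem_cyclotomicCoset_self i'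
    clear hii'
    induction a with
    | zero => rw [pow_zero, mul_one]
    | succ a ih =>
      rw [Setoid.ker_def, ih, ← hf]
      ring_nf
  · intro hf k
    exact hf (Setoid.ker_def.mpr (cyclotomicCoset_two_mul hm h2 k))

theorem card_two_mul_invariant_eq [NeZero n] {m : ℕ} (hm : m ≠ 0) (h2 : (2 : ZMod n) ^ m = 1)
    (β : Type*) :
    Nat.card {f : ZMod n → β // ∀ k, f (2 * k) = f k} =
      Nat.card β ^ (Set.range (cyclotomicCoset n)).ncard :=
  calc Nat.card {f : ZMod n → β // ∀ k, f (2 * k) = f k}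
      = Nat.card {f : ZMod n → β // Setoid.ker (cyclotomicCoset n) ≤ Setoid.ker f} :=
        Nat.card_congr <|
          Equiv.subtypeEquivRight (two_mul_invariant_iff_ker_cyclotomicCoset_le hm h2)
    _ = Nat.card (Quotient (Setoid.ker (cyclotomicCoset n)) → β) :=
        Nat.card_congr (Setoid.liftEquiv _)
    _ = Nat.card β ^ (Set.range (cyclotomicCoset n)).ncard := by
        rw [Nat.card_fun, Nat.card_congr (Setoid.quotientKerEquivRange _), Nat.card_coe_set_eq]

end CyclotomicCoset

theorem count_lcd_group_codes_of_dvd {G : Type*} [Group G] [Fintype G]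
    (hcyc : IsCyclic G) (n : ℕ) (hcard : Fintype.card G = n) (hodd : Odd n)
    (hdiv : ∃ j : ℕ, 1 ≤ j ∧ n ∣ 2 ^ j + 1)
    (t : ℕ) (ht : t = Set.ncard {S : Set (ZMod n) | ∃ i : ZMod n, S = cyclotomicCoset n i}) :
    Set.ncard {e : MonoidAlgebra (ZMod 2) G |
        e ≠ 0 ∧ e * e = e ∧ Finsupp.mapDomain (fun g : G => g⁻¹) e.coeff = e.coeff}
      = 2 ^ t - 1 := by
  obtain ⟨j, hj, hdvd⟩ := hdiv
  let : CommGroup G := hcyc.commGroup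
  have hn : Nat.card G = n := Nat.card_eq_fintype_card.trans hcard
  have : NeZero n := ⟨hn ▸ Nat.card_pos.ne'⟩
  have hsq := bijective_mul_self_of_odd_natCard (hn ▸ hodd : Odd (Nat.card G))
  have hset : {e : MonoidAlgebra (ZMod 2) G |
      e ≠ 0 ∧ e * e = e ∧ Finsupp.mapDomain (fun g : G => g⁻¹) e.coeff = e.coeff} =
      {e | e * e = e} \ {0} := by
    ext e
    simp only [Set.mem_ofPred_eq, Set.mem_sdiff, Set.mem_singleton_iff]
    exact ⟨fun ⟨h0, he, _⟩ => ⟨he, h0⟩, fun ⟨he, h0⟩ => ⟨h0, he,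
      MonoidAlgebra.coeff_mapDomain_inv_of_mul_self_eq_self hsq
        (pow_eq_inv_of_natCard_dvd (hn ▸ hdvd)) he⟩⟩
  have hcosets : {S | ∃ i, S = cyclotomicCoset n i} = Set.range (cyclotomicCoset n) := by
    ext; simp [eq_comm]
  obtain ⟨γ, hγ⟩ := hcyc.exists_generator
  rw [hset, Set.ncard_sdiff_singleton_of_mem (s := {e | e * e = e}) (mul_zero 0),
    ← Nat.card_coe_set_eq, Set.coe_ofPred, MonoidAlgebra.card_idempotent_eq hsq,
    card_mul_self_invariant_eq_of_mulEquiv (zmodMulEquivOfGenerator hγ hn),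
    card_two_mul_invariant_eq (m := 2 * j) (by omega)
      (by exact_mod_cast ZMod.pow_two_mul_eq_one_of_dvd hdvd),
    Nat.card_zmod, ht, hcosets]
end
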